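/- Let (G,B,w) be a finite weighted graph with boundary B and interior Ω. Then for any α ∈ A^{k−1}(G) and β ∈ A^k(G), the second Green's formula holds: ⟨dα, β⟩_Ω = ⟨α, δβ⟩_Ω − ⟨𝐃α, β⟩_{∂Ω}, where 𝐃α(v,v_1,...,v_k) = α(v_1,...,v_k) on boundary (k+1)-cliques {v,v_1,...,v_k} with v ∈ B, v_i ∈ Ω. -/
import Mathlib


open scoped Classical

namespace GraphHodge


variable {X : Type*}

/-- A tuple of vertices forms a clique: any two distinct indices give adjacent vertices. -/
def IsTupleClique (G : SimpleGraph X) {m : ℕ} (v : Fin m → X) : Prop :=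
  ∀ i j : Fin m, i ≠ j → G.Adj (v i) (v j)

/-- Indicator function of cliques. -/
noncomputable def cliqueInd (G : SimpleGraph X) {m : ℕ} (v : Fin m → X) : ℝ :=
  if IsTupleClique G v then 1 else 0

/-- A `k`-form on a graph: skew-symmetric and supported on `(k+1)`-cliques. -/
def IsGraphForm (G : SimpleGraph X) (k : ℕ) (α : (Fin (k + 1) → X) → ℝ) : Prop :=
  (∀ v, ¬ IsTupleClique G v → α v = 0) ∧
  ∀ (σ : Equiv.Perm (Fin (k + 1))) (v : Fin (k + 1) → X),
    α (v ∘ σ) = ((Equiv.Perm.sign σ : ℤ) : ℝ) * α v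

/-- The exterior differential of a `k`-form on a graph. -/
noncomputable def gd (G : SimpleGraph X) {k : ℕ} (α : (Fin (k + 1) → X) → ℝ) :
    (Fin (k + 2) → X) → ℝ :=
  fun v => cliqueInd G v * ∑ j : Fin (k + 2), (-1 : ℝ) ^ (j : ℕ) * α (v ∘ j.succAbove)

/-- Tensor product of an `r`-form and an `s`-form on a graph. -/
noncomputable def gtensor (G : SimpleGraph X) {r s : ℕ}
    (α : (Fin (r + 1) → X) → ℝ) (β : (Fin (s + 1) → X) → ℝ) :
    (Fin (r + s + 1) → X) → ℝ :=
  fun v => cliqueInd G v * α (fun i => v ⟨i.1, by have := i.2; omega⟩) *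
    β (fun i => v ⟨r + i.1, by have := i.2; omega⟩)

/-- Skew-symmetrization operator on functions of vertex tuples. -/
noncomputable def skewSym {m : ℕ} (f : (Fin m → X) → ℝ) : (Fin m → X) → ℝ :=
  fun v => ((m.factorial : ℝ))⁻¹ *
    ∑ σ : Equiv.Perm (Fin m), ((Equiv.Perm.sign σ : ℤ) : ℝ) * f (v ∘ σ)

/-- Wedge product of graph forms: skew-symmetrization of the tensor product. -/
noncomputable def gwedge (G : SimpleGraph X) {r s : ℕ}
    (α : (Fin (r + 1) → X) → ℝ) (β : (Fin (s + 1) → X) → ℝ) :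
    (Fin (r + s + 1) → X) → ℝ :=
  skewSym (gtensor G α β)

/-- A positive weight on all cliques of a graph, symmetric in its arguments and
vanishing off cliques. -/
structure GraphWeight (G : SimpleGraph X) where
  w : ∀ {m : ℕ}, (Fin (m + 1) → X) → ℝ
  symm : ∀ {m : ℕ} (σ : Equiv.Perm (Fin (m + 1))) (v : Fin (m + 1) → X), w (v ∘ σ) = w v
  pos : ∀ {m : ℕ} (v : Fin (m + 1) → X), IsTupleClique G v → 0 < w v
  eq_zero : ∀ {m : ℕ} (v : Fin (m + 1) → X), ¬ IsTupleClique G v → w v = 0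

variable {G : SimpleGraph X}

/-- The weighted inner product on `k`-forms of a finite weighted graph. -/
noncomputable def formInner [Fintype X] (w : GraphWeight G) {k : ℕ}
    (α β : (Fin (k + 1) → X) → ℝ) : ℝ :=
  (((k + 1).factorial : ℝ))⁻¹ * ∑ v : Fin (k + 1) → X, α v * β v * w.w v

/-- The codifferential (formal adjoint of `gd`) on a finite weighted graph. -/
noncomputable def gdelta [Fintype X] (w : GraphWeight G) {k : ℕ}
    (α : (Fin (k + 2) → X) → ℝ) : (Fin (k + 1) → X) → ℝ :=
  fun v => (w.w v)⁻¹ * ∑ u : X, α (Fin.cons u v) * w.w (Fin.cons u v)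

/-- `(G, B)` is a graph with boundary `B`: no edges inside `B`, and every boundary
vertex is adjacent to some interior vertex. -/
def IsBoundary (G : SimpleGraph X) (B : Set X) : Prop :=
  (∀ a ∈ B, ∀ b ∈ B, ¬ G.Adj a b) ∧ ∀ b ∈ B, ∃ a, a ∉ B ∧ G.Adj b a

/-- A boundary tuple: a clique whose first vertex is in `B` and the rest interior. -/
def IsBdryTuple (G : SimpleGraph X) (B : Set X) {k : ℕ} (v : Fin (k + 1) → X) : Prop :=
  IsTupleClique G v ∧ v 0 ∈ B ∧ ∀ i : Fin k, v i.succ ∉ B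

/-- A boundary `k`-form: supported on boundary `(k+1)`-cliques and skew-symmetric in
its last `k` variables. -/
def IsBdryForm (G : SimpleGraph X) (B : Set X) (k : ℕ) (φ : (Fin (k + 1) → X) → ℝ) : Prop :=
  (∀ v, ¬ IsBdryTuple G B v → φ v = 0) ∧
  ∀ (σ : Equiv.Perm (Fin k)) (v : Fin (k + 1) → X),
    φ (Fin.cons (v 0) (fun i => v (σ i).succ)) = ((Equiv.Perm.sign σ : ℤ) : ℝ) * φ v

/-- Inner product over tuples entirely inside the interior `Ω = Bᶜ`. -/
noncomputable def innerInt [Fintype X] (w : GraphWeight G) (B : Set X) {k : ℕ}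
    (α β : (Fin (k + 1) → X) → ℝ) : ℝ :=
  (((k + 1).factorial : ℝ))⁻¹ *
    ∑ v : Fin (k + 1) → X, (if ∀ i, v i ∉ B then (1 : ℝ) else 0) * (α v * β v * w.w v)

/-- Boundary inner product: first vertex in `B`, the others interior. -/
noncomputable def innerBdry [Fintype X] (w : GraphWeight G) (B : Set X) {k : ℕ}
    (α β : (Fin (k + 1) → X) → ℝ) : ℝ :=
  ((k.factorial : ℝ))⁻¹ *
    ∑ v : Fin (k + 1) → X,
      (if v 0 ∈ B ∧ ∀ i : Fin k, v i.succ ∉ B then (1 : ℝ) else 0) * (α v * β v * w.w v)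

/-- The normal-trace operator `𝐍` on `(k+1)`-forms. -/
noncomputable def Nop [Fintype X] (w : GraphWeight G) (B : Set X) {k : ℕ}
    (α : (Fin (k + 2) → X) → ℝ) : (Fin (k + 1) → X) → ℝ :=
  fun v => (w.w v)⁻¹ *
    ∑ u : X, (if u ∉ B then (1 : ℝ) else 0) * α (Fin.cons u v) * w.w (Fin.cons u v)

/-- The Dirichlet-trace operator `𝐃`: forget the boundary vertex. -/
def Dop {k : ℕ} (α : (Fin (k + 1) → X) → ℝ) : (Fin (k + 2) → X) → ℝ :=
  fun v => α (fun i => v i.succ)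


private lemma sum_comp_perm {X : Type*} [Fintype X] {m : ℕ} (σ : Equiv.Perm (Fin m))
    (F : (Fin m → X) → ℝ) : (∑ v : Fin m → X, F (v ∘ σ)) = ∑ v : Fin m → X, F v := by
  classical
  refine Fintype.sum_bijective (fun v : Fin m → X => v ∘ σ) ?_ _ _ (fun v => rfl)
  constructor
  · intro a b h
    funext i
    have := congrFun h (σ.symm i)
    simpa using this
  · intro b
    exact ⟨b ∘ σ.symm, by funext i; simp⟩

private lemma sum_cons {X : Type*} [Fintype X] {m : ℕ} (F : (Fin (m + 1) → X) → ℝ) :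
    (∑ v : Fin (m + 1) → X, F v) = ∑ u : X, ∑ v : Fin m → X, F (Fin.cons u v) := by
  classical
  rw [← (Fin.consEquiv (fun _ : Fin (m + 1) => X)).sum_comp F, Fintype.sum_prod_type]
  rfl

private lemma not_clique_cons {X : Type*} {G : SimpleGraph X} {m : ℕ} {u : X}
    {v : Fin (m + 1) → X} (h : ¬ IsTupleClique G v) :
    ¬ IsTupleClique G (Fin.cons u v : Fin (m + 2) → X) := by
  intro hc
  apply h
  intro i j hij
  have := hc i.succ j.succ (fun h' => hij (Fin.succ_injective _ h'))
  simpa using this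

/-- second Green's formula
`⟨dα, β⟩_Ω = ⟨α, δβ⟩_Ω − ⟨𝐃α, β⟩_{∂Ω}` on a finite weighted graph with boundary. -/
theorem green_second {X : Type*} [Fintype X] (G : SimpleGraph X) (B : Set X)
    (hB : IsBoundary G B) (w : GraphWeight G) (k : ℕ)
    (α : (Fin (k + 1) → X) → ℝ) (hα : IsGraphForm G k α)
    (β : (Fin (k + 2) → X) → ℝ) (hβ : IsGraphForm G (k + 1) β) :
    innerInt w B (gd G α) β = innerInt w B α (gdelta w β) - innerBdry w B (Dop α) β := by
  classical
  set S : ℝ := ∑ v : Fin (k + 2) → X,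
      (if ∀ i, v i ∉ B then (1 : ℝ) else 0) * (α (v ∘ Fin.succ) * β v * w.w v) with hSdef
  have hL : innerInt w B (gd G α) β = (((k + 1).factorial : ℝ))⁻¹ * S := by
    have step1 : ∀ v : Fin (k + 2) → X,
        (if ∀ i, v i ∉ B then (1 : ℝ) else 0) * (gd G α v * β v * w.w v)
          = ∑ j : Fin (k + 2), (if ∀ i, v i ∉ B then (1 : ℝ) else 0) *
              ((-1 : ℝ) ^ (j : ℕ) * (α (v ∘ j.succAbove) * β v * w.w v)) := by
      intro v
      rw [← Finset.mul_sum]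
      by_cases hv : IsTupleClique G v
      · congr 1
        simp only [gd, cliqueInd]
        rw [if_pos hv, one_mul, Finset.sum_mul, Finset.sum_mul]
        exact Finset.sum_congr rfl fun j _ => by ring
      · rw [w.eq_zero v hv]
        simp
    have step2 : ∀ j : Fin (k + 2),
        (∑ v : Fin (k + 2) → X, (if ∀ i, v i ∉ B then (1 : ℝ) else 0) *
            ((-1 : ℝ) ^ (j : ℕ) * (α (v ∘ j.succAbove) * β v * w.w v))) = S := by
      intro j
      refine ((sum_comp_perm (j.cycleRange) _).symm).trans ?_
      rw [hSdef]
      refine Finset.sum_congr rfl fun v _ => ?_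
      have h1 : (v ∘ ⇑j.cycleRange) ∘ j.succAbove = v ∘ Fin.succ := by
        funext i
        simp [Function.comp, Fin.cycleRange_succAbove]
      have h2 : β (v ∘ ⇑j.cycleRange) = (-1 : ℝ) ^ (j : ℕ) * β v := by
        rw [hβ.2 j.cycleRange v, Fin.sign_cycleRange]
        push_cast
        ring
      have h3 : w.w (v ∘ ⇑j.cycleRange) = w.w v := w.symm j.cycleRange v
      have h4 : (∀ i, (v ∘ ⇑j.cycleRange) i ∉ B) ↔ ∀ i, v i ∉ B := by
        constructor
        · intro h i
          have := h (j.cycleRange.symm i)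
          simpa using this
        · intro h i
          exact h _
      rw [h1, h2, h3, if_congr h4 rfl rfl]
      have hsq : (-1 : ℝ) ^ (j : ℕ) * (-1 : ℝ) ^ (j : ℕ) = 1 := by
        rw [← pow_add]
        exact Even.neg_one_pow ⟨(j : ℕ), rfl⟩
      by_cases hb : ∀ i, v i ∉ B
      · rw [if_pos hb]
        linear_combination (α (v ∘ Fin.succ) * β v * w.w v) * hsq
      · rw [if_neg hb]
        ring
    unfold innerInt
    rw [Finset.sum_congr rfl fun v _ => step1 v, Finset.sum_comm,
      Finset.sum_congr rfl fun j _ => step2 j, Finset.sum_const, Finset.card_univ,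
      Fintype.card_fin, nsmul_eq_mul, Nat.factorial_succ (k + 1)]
    have hf : (((k + 1).factorial : ℝ)) ≠ 0 := Nat.cast_ne_zero.mpr (Nat.factorial_ne_zero _)
    have hk : ((k : ℝ) + 1 + 1) ≠ 0 := by positivity
    push_cast
    field_simp
    ring
  have e1 : innerInt w B α (gdelta w β)
      = (((k + 1).factorial : ℝ))⁻¹ * ∑ v : Fin (k + 1) → X, ∑ u : X,
          (if ∀ i, v i ∉ B then (1 : ℝ) else 0) *
            (α v * (β (Fin.cons u v) * w.w (Fin.cons u v))) := by
    unfold innerInt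
    congr 1
    refine Finset.sum_congr rfl fun v _ => ?_
    rw [← Finset.mul_sum]
    congr 1
    simp only [gdelta]
    by_cases hv : IsTupleClique G v
    · have hw : w.w v ≠ 0 := ne_of_gt (w.pos v hv)
      have hT : ∀ T : ℝ, α v * ((w.w v)⁻¹ * T) * w.w v = α v * T := by
        intro T
        field_simp
      rw [hT, Finset.mul_sum]
    · have h0 : w.w v = 0 := w.eq_zero v hv
      have h0' : ∀ u : X, w.w (Fin.cons u v : Fin (k + 2) → X) = 0 :=
        fun u => w.eq_zero _ (not_clique_cons hv)
      simp [h0, h0']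
  have e2 : innerBdry w B (Dop α) β
      = (((k + 1).factorial : ℝ))⁻¹ * ∑ v : Fin (k + 1) → X, ∑ u : X,
          (if u ∈ B ∧ ∀ i, v i ∉ B then (1 : ℝ) else 0) *
            (α v * (β (Fin.cons u v) * w.w (Fin.cons u v))) := by
    unfold innerBdry
    congr 1
    rw [sum_cons, Finset.sum_comm]
    refine Finset.sum_congr rfl fun v _ => Finset.sum_congr rfl fun u _ => ?_
    have hD : Dop α (Fin.cons u v : Fin (k + 2) → X) = α v := by
      have hfun : (fun i : Fin (k + 1) => (Fin.cons u v : Fin (k + 2) → X) i.succ) = v := by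
        funext i
        simp
      simp only [Dop, hfun]
    rw [hD]
    simp only [Fin.cons_zero, Fin.cons_succ]
    ring
  have e3 : S = ∑ v : Fin (k + 1) → X, ∑ u : X,
      (if u ∉ B ∧ ∀ i, v i ∉ B then (1 : ℝ) else 0) *
        (α v * (β (Fin.cons u v) * w.w (Fin.cons u v))) := by
    rw [hSdef, sum_cons, Finset.sum_comm]
    refine Finset.sum_congr rfl fun v _ => Finset.sum_congr rfl fun u _ => ?_
    have hc : (Fin.cons u v : Fin (k + 2) → X) ∘ Fin.succ = v := by
      funext i
      simp [Function.comp]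
    have hcond : (∀ i, (Fin.cons u v : Fin (k + 2) → X) i ∉ B)
        ↔ (u ∉ B ∧ ∀ i, v i ∉ B) := by
      rw [Fin.forall_fin_succ]
      simp
    rw [hc, if_congr hcond rfl rfl]
    ring
  rw [hL, e1, e2, ← mul_sub, ← Finset.sum_sub_distrib]
  congr 1
  rw [e3]
  refine Finset.sum_congr rfl fun v _ => ?_
  rw [← Finset.sum_sub_distrib]
  refine Finset.sum_congr rfl fun u _ => ?_
  rw [← sub_mul]
  congr 1
  by_cases hu : u ∈ B <;> by_cases hv : ∀ i, v i ∉ B <;> simp [hu, hv]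


end GraphHodge
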